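/- Let Σ be a set of strings in general position whose union is disconnected. Then one can add a simple string contained in a single face of G(Σ), joining points of two distinct connected components, such that the resulting set of strings is in general position, has fewer connected components, and has no obstruction if Σ has none. -/

import Mathlib

open Set Topology

/-- Points of the plane. -/
abbrev Pt : Type := ℝ × ℝ

/-- A string: image of `[0,1]` under a map continuous on `[0,1]` and injective on `(0,1)`. -/
structure PString where
  f : ℝ → Pt
  cont : ContinuousOn f (Set.Icc 0 1)
  inj : Set.InjOn f (Set.Ioo 0 1)

namespace PString

def carrier (s : PString) : Set Pt := s.f '' Set.Icc 0 1

def ends (s : PString) : Set Pt := {s.f 0, s.f 1}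

def Simple (s : PString) : Prop := Set.InjOn s.f (Set.Icc 0 1)

end PString

/-- `A` crosses `B` transversally at `p`: near `p` the set `A` has points on both
sides of `B` (they cannot be joined inside `U` without meeting `B`). -/
def CrossesAt (A B : Set Pt) (p : Pt) : Prop :=
  p ∈ A ∩ B ∧ ∀ U ∈ nhds p, ∃ x ∈ (A ∩ U) \ B, ∃ y ∈ (A ∩ U) \ B,
    ∀ K : Set Pt, K ⊆ U \ B → IsPreconnected K → x ∈ K → y ∉ K

/-- A set of strings is in general position. -/
def GenPos (S : Set PString) : Prop :=
  ∀ σ ∈ S, ∀ τ ∈ S, σ ≠ τ →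
    (σ.carrier ∩ τ.carrier).Finite ∧
    ∀ p ∈ σ.carrier ∩ τ.carrier,
      CrossesAt σ.carrier τ.carrier p ∨ p ∈ σ.ends ∨ p ∈ τ.ends

def StringUnion (S : Set PString) : Set Pt := ⋃ σ ∈ S, σ.carrier

/-- Vertices of the underlying plane graph `G(Σ)`: ends of strings and crossings. -/
def Vset (S : Set PString) : Set Pt :=
  (⋃ σ ∈ S, σ.ends) ∪
    {p | ∃ σ ∈ S, ∃ τ ∈ S, σ ≠ τ ∧ CrossesAt σ.carrier τ.carrier p}

/-- A simple closed (Jordan) curve. -/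
def IsJordanCurve (C : Set Pt) : Prop :=
  Nonempty (↥(Metric.sphere (0 : Pt) 1) ≃ₜ ↥C)

/-- A cycle of the underlying plane graph `G(Σ)`, viewed as a simple closed curve
contained in the union of the strings. -/
def IsCycleOf (S : Set PString) (C : Set Pt) : Prop :=
  IsJordanCurve C ∧ C ⊆ StringUnion S

/-- The closed disk bounded by a simple closed curve: the curve together with all
bounded complementary components. -/
def EnclosedDisk (C : Set Pt) : Set Pt :=
  C ∪ {p | p ∉ C ∧ Bornology.IsBounded (connectedComponentIn Cᶜ p)}

/-- The set `σ` has (at least) two local branches at `v` inside the closed disk bounded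
by `C`: arbitrarily close to `v` there are two points of `σ` inside the disk which cannot
be joined within `σ` inside the disk avoiding `v`. -/
def TwoBranchesInside (σ : Set Pt) (C : Set Pt) (v : Pt) : Prop :=
  v ∈ σ ∧ ∀ U ∈ nhds v,
    ∃ x ∈ (σ ∩ U ∩ EnclosedDisk C) \ {v}, ∃ y ∈ (σ ∩ U ∩ EnclosedDisk C) \ {v},
      ∀ K : Set Pt, K ⊆ (σ ∩ EnclosedDisk C) \ {v} → IsPreconnected K → x ∈ K → y ∉ K

/-- A vertex `v` of a cycle `C` is a rainbow: all edges at `v` inside the closed disk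
bounded by `C` belong to pairwise distinct strings, i.e. no single string has two
branches at `v` inside the disk. -/
def RainbowV (S : Set PString) (C : Set Pt) (v : Pt) : Prop :=
  v ∈ C ∧ v ∈ Vset S ∧ ¬ ∃ σ ∈ S, TwoBranchesInside σ.carrier C v

/-- An obstruction: a cycle of `G(Σ)` with at most two rainbow vertices. -/
def ObstructionS (S : Set PString) (C : Set Pt) : Prop :=
  IsCycleOf S C ∧ {v | RainbowV S C v}.ncard ≤ 2

/-- The two edges of `C` at `v` both lie in the string `σ`: locally around `v`, the
curve `C` is contained in `σ`. -/
def CycLocallyIn (C : Set Pt) (σ : PString) (v : Pt) : Prop :=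
  ∃ U ∈ nhds v, (C ∩ U) \ {v} ⊆ σ.carrier

/-- `δ(C)`: the vertices of `C` whose two incident edges on `C` belong to distinct
strings of `Σ`. -/
def deltaSet (S : Set PString) (C : Set Pt) : Set Pt :=
  {v | v ∈ C ∧ v ∈ Vset S ∧ ¬ ∃ σ ∈ S, CycLocallyIn C σ v}

/-- A pseudoline: image of an injective continuous proper map `ℝ → ℝ²` whose
complement is disconnected. -/
def IsPseudoline (L : Set Pt) : Prop :=
  (∃ f : ℝ → Pt, Continuous f ∧ Function.Injective f ∧ IsProperMap f ∧
    Set.range f = L) ∧ ¬ IsPreconnected Lᶜ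

/-- An arrangement of pseudolines: every two meet in exactly one point, a
transversal crossing. -/
def IsArrangement (A : Set (Set Pt)) : Prop :=
  (∀ L ∈ A, IsPseudoline L) ∧
  ∀ L ∈ A, ∀ M ∈ A, L ≠ M →
    (∃! p, p ∈ L ∩ M) ∧ ∀ p ∈ L ∩ M, CrossesAt L M p

/-- `Σ` extends to an arrangement of pseudolines: a different pseudoline for each
string, each string contained in its pseudoline. -/
def ExtendsToArrangement (S : Set PString) : Prop :=
  ∃ A : Set (Set Pt), IsArrangement A ∧ ∃ ℓ : PString → Set Pt,
    Set.InjOn ℓ S ∧ ∀ σ ∈ S, ℓ σ ∈ A ∧ σ.carrier ⊆ ℓ σ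

/-- A (closed) simple arc from `a` to `b`. -/
def IsArc (e : Set Pt) (a b : Pt) : Prop :=
  ∃ g : ℝ → Pt, ContinuousOn g (Set.Icc 0 1) ∧ Set.InjOn g (Set.Icc 0 1) ∧
    g '' Set.Icc 0 1 = e ∧ g 0 = a ∧ g 1 = b

/-- `p` is incident with the outer (unbounded) face of `G(Σ)`. -/
def InOuterFace (S : Set PString) (p : Pt) : Prop :=
  p ∈ closure {q | q ∉ StringUnion S ∧
    ¬ Bornology.IsBounded (connectedComponentIn (StringUnion S)ᶜ q)}

/-- The set of connected components of a subset of the plane. -/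
def Comps (X : Set Pt) : Set (Set Pt) :=
  {K | ∃ p ∈ X, K = connectedComponentIn X p}


/-!
Split `⋃Σ` into two disjoint nonempty closed sets `A` and `B`. Walking along a segment from `A`
to `B`, the piece between the last visit of `A` and the next visit of `B` is a straight string
`τ = [p, q]` whose interior misses `⋃Σ`: it lies in one face and merges the components of `p`
and `q`.

A Jordan curve has no cut point. So a cycle in `⋃Σ ∪ τ` through an interior point `z` of `τ` lies
on one side of the cut `(A ∪ [p, z]) ∩ (B ∪ [z, q]) = {z}`, say in `A ∪ [p, z]`; cutting at `p`, it
lies in `A` (impossible, as `z ∉ A`) or in `[p, z]`, on which a linear functional is injective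
(impossible for a Jordan curve). So every cycle of `Σ ∪ {τ}` is a cycle of `Σ`, meeting `τ` only
at its ends, where `τ` has a single branch. Hence rainbow vertices of `Σ` stay rainbow, and an
obstruction of `Σ ∪ {τ}` is one of `Σ`; the junk value `ncard = 0` of infinite sets does no harm
because the two rainbow sets differ by at most the ends of `τ`.
-/
open Function

theorem isPreconnected_sphere_sdiff_singleton {E : Type*} [NormedAddCommGroup E]
    [NormedSpace ℝ E] {q : E} {r : ℝ} (hq : q ∈ Metric.sphere (0 : E) r) :
    IsPreconnected (Metric.sphere (0 : E) r \ {q}) := by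
  rw [mem_sphere_zero_iff_norm] at hq
  subst hq
  rcases eq_or_ne q 0 with rfl | hq0
  · simpa using isPreconnected_empty
  have hr : 0 < ‖q‖ := norm_pos_iff.mpr hq0
  -- radial projection of the complement of the ray through `q`, star-shaped about `-q`
  set V : Set E := {x | ∀ t : ℝ, 0 ≤ t → x ≠ t • q}
  have hV0 : ∀ x ∈ V, x ≠ 0 := fun x hx => by simpa using hx 0 le_rfl
  have hstar : StarConvex ℝ (-q) V := by
    intro y hy a b ha hb hab t ht h
    rcases hb.eq_or_lt with rfl | hb
    · rw [add_zero] at hab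
      subst hab
      have : (1 + t) • q = 0 := by rw [add_smul, one_smul, ← h]; simp
      exact hq0 ((smul_eq_zero.mp this).resolve_left (by linarith))
    · refine hy ((t + a) / b) (by positivity) ?_
      rw [div_eq_inv_mul, mul_smul, add_smul, ← h]
      simp [smul_smul, hb.ne']
  have hmem : -q ∈ V := fun t ht h => by
    have : (1 + t) • q = 0 := by rw [add_smul, one_smul, ← h]; simp
    exact hq0 ((smul_eq_zero.mp this).resolve_left (by linarith))
  have himage : Metric.sphere (0 : E) ‖q‖ \ {q} = (fun x => (‖q‖ / ‖x‖) • x) '' V := by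
    ext y
    simp only [mem_sdiff, mem_sphere_zero_iff_norm, mem_singleton_iff, mem_image]
    constructor
    · rintro ⟨hy, hyq⟩
      refine ⟨y, fun t ht h => hyq ?_, by simp [hy, hr.ne']⟩
      have : t = 1 := by
        have := congrArg norm h
        rw [norm_smul, Real.norm_of_nonneg ht, hy] at this
        nlinarith
      rw [h, this, one_smul]
    · rintro ⟨x, hx, rfl⟩
      have hx0 : ‖x‖ ≠ 0 := norm_ne_zero_iff.mpr (hV0 x hx)
      refine ⟨by rw [norm_smul, Real.norm_of_nonneg (by positivity)]; field_simp, fun h => ?_⟩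
      refine hx (‖x‖ / ‖q‖) (by positivity) ?_
      calc x = (‖x‖ / ‖q‖ * (‖q‖ / ‖x‖)) • x := by field_simp; simp
        _ = (‖x‖ / ‖q‖) • q := by rw [mul_smul, h]
  rw [himage]
  refine (hstar.isPathConnected hmem).isConnected.isPreconnected.image _ ?_
  exact (continuousOn_const.div continuous_norm.continuousOn
    fun x hx => norm_ne_zero_iff.mpr (hV0 x hx)).smul continuousOn_id

theorem Set.inter_image_eq_singleton {α β : Type*} {X : Set β} {F : α → β} {I : Set α} {a : α}
    (ha : a ∈ I) (hFa : F a ∈ X) (hX : ∀ t ∈ I, F t ∈ X → t = a) : X ∩ F '' I = {F a} := by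
  refine Subset.antisymm ?_ (singleton_subset_iff.mpr ⟨hFa, a, ha, rfl⟩)
  rintro y ⟨hyX, t, ht, rfl⟩
  rw [hX t ht hyX]
  rfl

theorem union_image_Icc_inter_union_image_Icc {β : Type*} {A B : Set β} {F : ℝ → β}
    (hAB : Disjoint A B) (hF : Injective F) (hA : ∀ t ∈ Icc (0 : ℝ) 1, F t ∈ A → t = 0)
    (hB : ∀ t ∈ Icc (0 : ℝ) 1, F t ∈ B → t = 1) {s : ℝ} (hs : s ∈ Ioo 0 1) :
    (A ∪ F '' Icc 0 s) ∩ (B ∪ F '' Icc s 1) = {F s} := by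
  refine Subset.antisymm ?_ (singleton_subset_iff.mpr
    ⟨Or.inr ⟨s, ⟨hs.1.le, le_rfl⟩, rfl⟩, Or.inr ⟨s, ⟨le_rfl, hs.2.le⟩, rfl⟩⟩)
  rintro y ⟨hyA | ⟨t, ht, rfl⟩, hyB | ⟨t', ht', hyt'⟩⟩
  · exact (hAB.ne_of_mem hyA hyB rfl).elim
  · subst hyt'
    linarith [hA t' ⟨hs.1.le.trans ht'.1, ht'.2⟩ hyA, ht'.1, hs.1]
  · linarith [hB t ⟨ht.1, ht.2.trans hs.2.le⟩ hyB, ht.2, hs.2]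
  · obtain rfl := hF hyt'
    exact congrArg F (le_antisymm ht.2 ht'.1)

namespace IsJordanCurve

variable {C : Set Pt}

theorem isPreconnected (hC : IsJordanCurve C) : IsPreconnected C := by
  obtain ⟨e⟩ := hC
  have hrank : 1 < Module.rank ℝ Pt := by rw [rank_prod', Module.rank_self]; norm_num
  have hsphere : IsPreconnected (univ : Set (Metric.sphere (0 : Pt) 1)) := by
    rw [← Topology.IsInducing.subtypeVal.isPreconnected_image, image_univ, Subtype.range_coe]
    exact isPreconnected_sphere hrank 0 1
  have himage : Subtype.val ∘ e '' univ = C := by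
    rw [image_univ, e.surjective.range_comp, Subtype.range_coe]
  exact himage ▸ hsphere.image _ (continuous_subtype_val.comp e.continuous).continuousOn

theorem isPreconnected_sdiff_singleton (hC : IsJordanCurve C) (p : Pt) :
    IsPreconnected (C \ {p}) := by
  by_cases hp : p ∈ C
  · obtain ⟨e⟩ := hC
    set q := e.symm ⟨p, hp⟩
    have himage : C \ {p} = (fun s => (e s : Pt)) '' (Subtype.val ⁻¹' {(q : Pt)}ᶜ) := by
      ext x
      constructor
      · rintro ⟨hx, hxp⟩
        refine ⟨e.symm ⟨x, hx⟩, fun h => hxp ?_, by simp⟩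
        simpa [q] using congrArg (fun s => (e s : Pt)) (Subtype.ext h)
      · rintro ⟨s, hs, rfl⟩
        refine ⟨(e s).2, fun h => hs ?_⟩
        obtain rfl : (e s : Pt) = p := h
        simp [q]
    rw [himage]
    refine IsPreconnected.image ?_ _ (continuous_subtype_val.comp e.continuous).continuousOn
    rw [← Topology.IsInducing.subtypeVal.isPreconnected_image, image_preimage_eq_inter_range,
      Subtype.range_coe, ← sdiff_eq_compl_inter]
    exact isPreconnected_sphere_sdiff_singleton q.2
  · simpa [hp] using hC.isPreconnected

theorem nontrivial (hC : IsJordanCurve C) : C.Nontrivial := by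
  obtain ⟨e⟩ := hC
  have h1 : ((1 : ℝ), (0 : ℝ)) ∈ Metric.sphere (0 : Pt) 1 := by simp [Prod.norm_def]
  have h2 : ((-1 : ℝ), (0 : ℝ)) ∈ Metric.sphere (0 : Pt) 1 := by simp [Prod.norm_def]
  refine ⟨e ⟨_, h1⟩, (e _).2, e ⟨_, h2⟩, (e _).2, fun h => ?_⟩
  have := congrArg Prod.fst (Subtype.ext_iff.mp (e.injective (Subtype.ext h)))
  norm_num at this

theorem not_injOn (hC : IsJordanCurve C) {g : Pt → ℝ} (hg : Continuous g) : ¬ InjOn g C := by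
  intro hinj
  obtain ⟨x, hx, y, hy, hxy⟩ := hC.nontrivial
  wlog hlt : g x < g y generalizing x y
  · exact this y hy x hx hxy.symm
      ((not_lt.mp hlt).lt_of_ne fun h => hxy (hinj hx hy h.symm))
  obtain ⟨m, hxm, hmy⟩ := exists_between hlt
  have hm : m ∈ Icc (g x) (g y) := ⟨hxm.le, hmy.le⟩
  obtain ⟨p, hp, hpm⟩ :=
    (hC.isPreconnected.image g hg.continuousOn).Icc_subset ⟨x, hx, rfl⟩ ⟨y, hy, rfl⟩ hm
  -- `C \ {p}` is still preconnected and its image spans `m`, so `m` has a second preimage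
  have hxp : x ≠ p := by rintro rfl; linarith
  have hyp : y ≠ p := by rintro rfl; linarith
  obtain ⟨p', ⟨hp', hp'p⟩, hp'm⟩ :=
    ((hC.isPreconnected_sdiff_singleton p).image g hg.continuousOn).Icc_subset
      ⟨x, ⟨hx, hxp⟩, rfl⟩ ⟨y, ⟨hy, hyp⟩, rfl⟩ hm
  exact hp'p (hinj hp' hp (hp'm.trans hpm.symm))

theorem subset_or_subset_of_inter_eq_singleton (hC : IsJordanCurve C) {P Q : Set Pt} {z : Pt}
    (hP : IsClosed P) (hQ : IsClosed Q) (hCPQ : C ⊆ P ∪ Q) (hPQ : P ∩ Q = {z}) :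
    C ⊆ P ∨ C ⊆ Q := by
  have hz : z ∈ P ∩ Q := hPQ ▸ rfl
  have hsplit := isPreconnected_iff_subset_of_disjoint_closed.mp
    (hC.isPreconnected_sdiff_singleton z) P Q hP hQ (sdiff_subset.trans hCPQ) (by simp [hPQ])
  simp only [sdiff_singleton_subset_iff] at hsplit
  rwa [insert_eq_of_mem hz.1, insert_eq_of_mem hz.2] at hsplit

theorem subset_of_subset_union_of_injOn (hC : IsJordanCurve C) {X J : Set Pt} {e : Pt}
    (hX : IsClosed X) (hJ : IsClosed J) (hXJ : X ∩ J = {e}) {g : Pt → ℝ} (hg : Continuous g)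
    (hgJ : InjOn g J) (hCXJ : C ⊆ X ∪ J) : C ⊆ X :=
  (hC.subset_or_subset_of_inter_eq_singleton hX hJ hCXJ hXJ).resolve_right
    fun h => hC.not_injOn hg (hgJ.mono h)

theorem subset_of_subset_union_bridge (hC : IsJordanCurve C) {A B : Set Pt} (hA : IsClosed A)
    (hB : IsClosed B) (hAB : Disjoint A B) {F : ℝ → Pt} {g : Pt → ℝ} (hF : Continuous F)
    (hg : Continuous g) (hgF : LeftInverse g F) (hF0 : F 0 ∈ A) (hF1 : F 1 ∈ B)
    (hFAB : ∀ s ∈ Ioo (0 : ℝ) 1, F s ∉ A ∪ B) (hCsub : C ⊆ F '' Icc 0 1 ∪ (A ∪ B)) :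
    C ⊆ A ∪ B := by
  have hends : ∀ t ∈ Icc (0 : ℝ) 1, F t ∈ A ∪ B → t = 0 ∨ t = 1 := fun t ht htAB => by
    have ht' : t ∈ Icc (0 : ℝ) 1 \ Ioo 0 1 := ⟨ht, fun h => hFAB t h htAB⟩
    rwa [Icc_sdiff_Ioo_same zero_le_one] at ht'
  have hA_eq : ∀ t ∈ Icc (0 : ℝ) 1, F t ∈ A → t = 0 := fun t ht htA =>
    (hends t ht (Or.inl htA)).resolve_right fun h => hAB.ne_of_mem htA (by rwa [h]) rfl
  have hB_eq : ∀ t ∈ Icc (0 : ℝ) 1, F t ∈ B → t = 1 := fun t ht htB =>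
    (hends t ht (Or.inr htB)).resolve_left fun h => hAB.ne_of_mem (by rwa [h]) htB rfl
  have hgJ : ∀ I : Set ℝ, InjOn g (F '' I) := by
    rintro I _ ⟨t, -, rfl⟩ _ ⟨t', -, rfl⟩ h
    rw [hgF t, hgF t'] at h
    rw [h]
  intro x hxC
  by_contra hx
  obtain ⟨s, hs, rfl⟩ := (hCsub hxC).resolve_right hx
  have hs' : s ∈ Ioo (0 : ℝ) 1 :=
    ⟨hs.1.lt_of_ne fun h => hx (Or.inl (h ▸ hF0)), hs.2.lt_of_ne fun h => hx (Or.inr (h ▸ hF1))⟩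
  -- cut the arc at `F s`; the curve must stay on one side of the cut
  have hCPQ : C ⊆ (A ∪ F '' Icc 0 s) ∪ (B ∪ F '' Icc s 1) := by
    intro y hy
    rcases hCsub hy with ⟨t, ht, rfl⟩ | hy | hy
    · rcases le_total t s with hts | hst
      · exact Or.inl (Or.inr ⟨t, ⟨ht.1, hts⟩, rfl⟩)
      · exact Or.inr (Or.inr ⟨t, ⟨hst, ht.2⟩, rfl⟩)
    · exact Or.inl (Or.inl hy)
    · exact Or.inr (Or.inl hy)
  have hJ : ∀ u v : ℝ, IsClosed (F '' Icc u v) := fun u v => (isCompact_Icc.image hF).isClosed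
  rcases hC.subset_or_subset_of_inter_eq_singleton (hA.union (hJ 0 s)) (hB.union (hJ s 1)) hCPQ
    (union_image_Icc_inter_union_image_Icc hAB hgF.injective hA_eq hB_eq hs') with hCP | hCQ
  · have hAJ := inter_image_eq_singleton (I := Icc 0 s) ⟨le_rfl, hs'.1.le⟩ hF0
      fun t ht => hA_eq t ⟨ht.1, ht.2.trans hs'.2.le⟩
    exact hx (Or.inl (hC.subset_of_subset_union_of_injOn hA (hJ 0 s) hAJ hg (hgJ _) hCP hxC))
  · have hBJ := inter_image_eq_singleton (I := Icc s 1) ⟨hs'.2.le, le_rfl⟩ hF1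
      fun t ht => hB_eq t ⟨hs'.1.le.trans ht.1, ht.2⟩
    exact hx (Or.inr (hC.subset_of_subset_union_of_injOn hB (hJ s 1) hBJ hg (hgJ _) hCQ hxC))

end IsJordanCurve

theorem exists_continuous_leftInverse_lineMap {E : Type*} [NormedAddCommGroup E]
    [NormedSpace ℝ E] {p q : E} (hpq : p ≠ q) :
    ∃ g : E → ℝ, Continuous g ∧ LeftInverse g (AffineMap.lineMap p q) := by
  have hqp : ‖q - p‖ ≠ 0 := norm_ne_zero_iff.mpr (sub_ne_zero.mpr hpq.symm)
  obtain ⟨ℓ, -, hℓ⟩ := exists_dual_vector ℝ (q - p) hqp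
  have hℓ0 : ℓ q - ℓ p ≠ 0 := by
    rw [← map_sub, hℓ]; exact_mod_cast hqp
  refine ⟨fun x => ℓ (x - p) / ℓ (q - p), by fun_prop, fun s => ?_⟩
  simp [AffineMap.lineMap_apply, hℓ0]

theorem exists_openSegment_disjoint {E : Type*} [AddCommGroup E] [Module ℝ E]
    [TopologicalSpace E] [IsTopologicalAddGroup E] [ContinuousSMul ℝ E] {A B : Set E}
    (hA : IsClosed A) (hB : IsClosed B) (hAB : Disjoint A B) (hAne : A.Nonempty)
    (hBne : B.Nonempty) : ∃ p ∈ A, ∃ q ∈ B, Disjoint (openSegment ℝ p q) (A ∪ B) := by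
  obtain ⟨a, ha⟩ := hAne
  obtain ⟨b, hb⟩ := hBne
  set γ : ℝ →ᵃ[ℝ] E := AffineMap.lineMap a b
  have hγ : Continuous γ := AffineMap.lineMap_continuous
  -- `t₁` is the last time the segment `[a, b]` is in `A`, `t₂` the first time after it is in `B`
  set S₁ := Icc 0 1 ∩ γ ⁻¹' A
  have hS₁ : IsCompact S₁ := isCompact_Icc.inter_right (hA.preimage hγ)
  have ht₁ : sSup S₁ ∈ S₁ := hS₁.sSup_mem ⟨0, ⟨le_rfl, zero_le_one⟩, by simpa [γ] using ha⟩
  set t₁ := sSup S₁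
  set S₂ := Icc t₁ 1 ∩ γ ⁻¹' B
  have hS₂ : IsCompact S₂ := isCompact_Icc.inter_right (hB.preimage hγ)
  have ht₂ : sInf S₂ ∈ S₂ := hS₂.sInf_mem ⟨1, ⟨ht₁.1.2, le_rfl⟩, by simpa [γ] using hb⟩
  set t₂ := sInf S₂
  have ht₁₂ : t₁ < t₂ := ht₂.1.1.lt_of_ne fun h => hAB.ne_of_mem ht₁.2 (h ▸ ht₂.2) rfl
  refine ⟨γ t₁, ht₁.2, γ t₂, ht₂.2, ?_⟩
  rw [← image_openSegment, openSegment_eq_Ioo ht₁₂, disjoint_image_left]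
  refine disjoint_left.mpr fun t ⟨hlt₁, hlt₂⟩ htAB => htAB.elim (fun htA => ?_) fun htB => ?_
  · exact (le_csSup hS₁.bddAbove ⟨⟨ht₁.1.1.trans hlt₁.le, hlt₂.le.trans ht₂.1.2⟩, htA⟩).not_gt hlt₁
  · exact (csInf_le hS₂.bddBelow ⟨⟨hlt₁.le, hlt₂.le.trans ht₂.1.2⟩, htB⟩).not_gt hlt₂

theorem exists_isClosed_partition_of_not_isPreconnected {α : Type*} [TopologicalSpace α]
    {K : Set α} (hK : IsClosed K) (h : ¬ IsPreconnected K) :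
    ∃ A B : Set α, IsClosed A ∧ IsClosed B ∧ Disjoint A B ∧ A.Nonempty ∧ B.Nonempty ∧
      A ∪ B = K := by
  simp only [isPreconnected_iff_subset_of_fully_disjoint_closed hK, not_forall, not_or,
    not_subset, exists_prop] at h
  obtain ⟨u, v, hu, hv, hKuv, huv, ⟨x, hxK, hxu⟩, ⟨y, hyK, hyv⟩⟩ := h
  refine ⟨K ∩ u, K ∩ v, hK.inter hu, hK.inter hv, huv.mono inter_subset_right inter_subset_right,
    ⟨y, hyK, (hKuv hyK).resolve_right hyv⟩, ⟨x, hxK, (hKuv hxK).resolve_left hxu⟩, ?_⟩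
  rw [← inter_union_distrib_left, inter_eq_left.mpr hKuv]

theorem connectedComponentIn_union_ne {α : Type*} [TopologicalSpace α] {A B : Set α}
    (hA : IsClosed A) (hB : IsClosed B) (hAB : Disjoint A B) {p q : α} (hp : p ∈ A)
    (hq : q ∈ B) : connectedComponentIn (A ∪ B) p ≠ connectedComponentIn (A ∪ B) q := by
  intro h
  have hsub := isPreconnected_iff_subset_of_disjoint_closed.mp
    (isPreconnected_connectedComponentIn (x := p)) A B hA hB (connectedComponentIn_subset _ _)
    (by rw [hAB.inter_eq, inter_empty])
  have hpc : p ∈ connectedComponentIn (A ∪ B) p := mem_connectedComponentIn (Or.inl hp)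
  have hqc : q ∈ connectedComponentIn (A ∪ B) p := h ▸ mem_connectedComponentIn (Or.inr hq)
  rcases hsub with hsub | hsub
  · exact hAB.ne_of_mem (hsub hqc) hq rfl
  · exact hAB.ne_of_mem hp (hsub hpc) rfl

theorem Set.ncard_image_lt_ncard_image_of_factor {α β γ : Type*} {f : α → β} {g : α → γ}
    {X : Set α} (hfin : (g '' X).Finite) (hfg : ∀ x ∈ X, ∀ y ∈ X, g x = g y → f x = f y)
    {a b : α} (ha : a ∈ X) (hb : b ∈ X) (hgab : g a ≠ g b) (hfab : f a = f b) :
    (f '' X).ncard < (g '' X).ncard := by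
  have : Nonempty α := ⟨a⟩
  set h := f ∘ invFunOn g X
  have hh : ∀ x ∈ X, h (g x) = f x := fun x hx =>
    hfg _ (invFunOn_mem ⟨x, hx, rfl⟩) x hx (invFunOn_eq ⟨x, hx, rfl⟩)
  have himage : f '' X = h '' (g '' X) := by
    rw [image_image]
    exact (image_congr hh).symm
  rw [himage]
  refine (ncard_image_le hfin).lt_of_ne fun heq => hgab ?_
  exact (ncard_image_iff hfin).mp heq ⟨a, ha, rfl⟩ ⟨b, hb, rfl⟩ (by rw [hh a ha, hh b hb, hfab])

theorem comps_eq_image (X : Set Pt) : Comps X = connectedComponentIn X '' X := by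
  ext
  simp [Comps, eq_comm]

theorem connectedComponentIn_eq_of_isPreconnected {α : Type*} [TopologicalSpace α]
    {X T : Set α} (hT : IsPreconnected T) (hTX : T ⊆ X) {x y : α} (hx : x ∈ T) (hy : y ∈ T) :
    connectedComponentIn X x = connectedComponentIn X y :=
  connectedComponentIn_eq (hT.subset_connectedComponentIn hx hTX hy)

theorem finite_comps_biUnion {ι : Type*} {S : Set ι} {U : ι → Set Pt} (hS : S.Finite)
    (hU : ∀ i ∈ S, IsPreconnected (U i)) : (Comps (⋃ i ∈ S, U i)).Finite := by
  rw [comps_eq_image, image_iUnion₂]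
  refine hS.biUnion fun i hi => Subsingleton.finite ?_
  rintro _ ⟨x, hx, rfl⟩ _ ⟨y, hy, rfl⟩
  exact connectedComponentIn_eq_of_isPreconnected (hU i hi) (subset_biUnion_of_mem hi) hx hy

theorem ncard_comps_union_lt {K T : Set Pt} (hK : (Comps K).Finite) (hT : IsPreconnected T)
    {p q : Pt} (hp : p ∈ T ∩ K) (hq : q ∈ T ∩ K)
    (hpq : connectedComponentIn K p ≠ connectedComponentIn K q) :
    (Comps (T ∪ K)).ncard < (Comps K).ncard := by
  have hTK : connectedComponentIn (T ∪ K) '' T ⊆ connectedComponentIn (T ∪ K) '' K := by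
    rintro _ ⟨x, hx, rfl⟩
    exact ⟨p, hp.2, connectedComponentIn_eq_of_isPreconnected hT subset_union_left hp.1 hx⟩
  rw [comps_eq_image, image_union, union_eq_right.mpr hTK, comps_eq_image]
  rw [comps_eq_image] at hK
  refine ncard_image_lt_ncard_image_of_factor hK (fun x _ y hy hxy => ?_) hp.2 hq.2 hpq
    (connectedComponentIn_eq_of_isPreconnected hT subset_union_left hp.1 hq.1)
  refine connectedComponentIn_eq (connectedComponentIn_mono x subset_union_right ?_)
  exact hxy ▸ mem_connectedComponentIn hy

theorem IsPreconnected.subset_enclosedDisk {C O : Set Pt} (hO : IsPreconnected O)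
    (hOC : Disjoint O C) {x : Pt} (hx : x ∈ O) (hxC : x ∈ EnclosedDisk C) :
    O ⊆ EnclosedDisk C := by
  rcases hxC with hxC | ⟨-, hbdd⟩
  · exact (hOC.ne_of_mem hx hxC rfl).elim
  intro y hy
  refine Or.inr ⟨hOC.notMem_of_mem_left hy, ?_⟩
  rwa [← connectedComponentIn_eq_of_isPreconnected hO (subset_compl_iff_disjoint_right.mpr hOC)
    hx hy]

namespace PString

theorem isCompact_carrier (σ : PString) : IsCompact σ.carrier :=
  isCompact_Icc.image_of_continuousOn σ.cont

theorem isPreconnected_carrier (σ : PString) : IsPreconnected σ.carrier :=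
  isPreconnected_Icc.image _ σ.cont

theorem finite_ends (σ : PString) : σ.ends.Finite :=
  (finite_singleton _).insert _

theorem carrier_sdiff_ends {τ : PString} (hτ : τ.Simple) :
    τ.carrier \ τ.ends = τ.f '' Ioo 0 1 := by
  have h01 : ({0, 1} : Set ℝ) ⊆ Icc 0 1 := by simp [insert_subset_iff]
  rw [carrier, ends, ← image_pair, ← hτ.image_sdiff_subset h01, Icc_sdiff_both]

theorem inter_carrier_subset_ends {τ σ : PString} {X : Set Pt}
    (hτX : Disjoint (τ.f '' Ioo 0 1) X) (hσX : σ.carrier ⊆ X) :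
    τ.carrier ∩ σ.carrier ⊆ τ.ends := by
  rintro _ ⟨⟨s, hs, rfl⟩, hσ⟩
  rcases hs.1.eq_or_lt with rfl | hs0
  · exact Or.inl rfl
  rcases hs.2.eq_or_lt with rfl | hs1
  · exact Or.inr rfl
  exact (hτX.ne_of_mem ⟨s, ⟨hs0, hs1⟩, rfl⟩ (hσX hσ) rfl).elim

theorem exists_sdiff_ends_subset_connectedComponentIn {τ : PString} (hτ : τ.Simple)
    {X : Set Pt} (hτX : Disjoint (τ.f '' Ioo 0 1) X) :
    ∃ q ∉ X, τ.carrier \ τ.ends ⊆ connectedComponentIn Xᶜ q := by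
  have hhalf : (1 / 2 : ℝ) ∈ Ioo 0 1 := by norm_num
  refine ⟨τ.f (1 / 2), hτX.notMem_of_mem_left ⟨_, hhalf, rfl⟩, ?_⟩
  rw [carrier_sdiff_ends hτ]
  exact (isPreconnected_Ioo.image _ (τ.cont.mono Ioo_subset_Icc_self)).subset_connectedComponentIn
    ⟨_, hhalf, rfl⟩ (subset_compl_iff_disjoint_right.mpr hτX)

theorem not_twoBranchesInside {τ : PString} (hτ : τ.Simple) {C : Set Pt}
    (hτC : Disjoint (τ.f '' Ioo 0 1) C) {v : Pt} (hv : v ∈ C) :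
    ¬ TwoBranchesInside τ.carrier C v := by
  rintro ⟨hvτ, hloc⟩
  have hτO : τ.f '' Ioo 0 1 ⊆ τ.carrier := image_mono Ioo_subset_Icc_self
  have hOpre : IsPreconnected (τ.f '' Ioo 0 1) :=
    isPreconnected_Ioo.image _ (τ.cont.mono Ioo_subset_Icc_self)
  have hvO : v ∉ τ.f '' Ioo 0 1 := hτC.notMem_of_mem_right hv
  have hv01 : v ∈ τ.ends := by
    by_contra h
    exact hvO (carrier_sdiff_ends hτ ▸ ⟨hvτ, h⟩)
  have h01 : τ.f 0 ≠ τ.f 1 := fun h =>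
    zero_ne_one (hτ ⟨le_rfl, zero_le_one⟩ ⟨zero_le_one, le_rfl⟩ h)
  set r := dist (τ.f 0) (τ.f 1)
  -- the ball of radius `r` about one end misses the other end
  have hnear : ∀ z ∈ (τ.carrier ∩ Metric.ball v r ∩ EnclosedDisk C) \ {v},
      z ∈ τ.f '' Ioo 0 1 := by
    rintro z ⟨⟨⟨hzτ, hzr⟩, -⟩, hzv⟩
    rw [← carrier_sdiff_ends hτ]
    refine ⟨hzτ, fun hzends => ?_⟩
    rcases hv01 with rfl | rfl <;> rcases hzends with rfl | rfl <;>
      simp_all [r, Metric.mem_ball, dist_comm]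
  obtain ⟨x, hx, y, hy, hsep⟩ := hloc _ (Metric.ball_mem_nhds v (dist_pos.mpr h01))
  obtain ⟨s, hs, rfl⟩ := hnear x hx
  obtain ⟨t, ht, rfl⟩ := hnear y hy
  have hOD : τ.f '' Ioo 0 1 ⊆ EnclosedDisk C := hOpre.subset_enclosedDisk hτC ⟨s, hs, rfl⟩ hx.1.2
  have hst : uIcc s t ⊆ Ioo 0 1 := ordConnected_Ioo.uIcc_subset hs ht
  refine hsep (τ.f '' uIcc s t) ?_ (isPreconnected_uIcc.image _ (τ.cont.mono
    (hst.trans Ioo_subset_Icc_self))) ⟨s, left_mem_uIcc, rfl⟩ ⟨t, right_mem_uIcc, rfl⟩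
  rintro _ ⟨u, hu, rfl⟩
  have hu' : τ.f u ∈ τ.f '' Ioo 0 1 := ⟨u, hst hu, rfl⟩
  exact ⟨⟨hτO hu', hOD hu'⟩, fun h => hvO ((mem_singleton_iff.mp h) ▸ hu')⟩

noncomputable def ofSegment (p q : Pt) (h : p ≠ q) : PString where
  f := AffineMap.lineMap p q
  cont := AffineMap.lineMap_continuous.continuousOn
  inj := (AffineMap.lineMap_injective ℝ h).injOn

end PString

theorem stringUnion_insert (τ : PString) (S : Set PString) :
    StringUnion (insert τ S) = τ.carrier ∪ StringUnion S := by
  simp [StringUnion]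

theorem carrier_subset_stringUnion {S : Set PString} {σ : PString} (hσ : σ ∈ S) :
    σ.carrier ⊆ StringUnion S :=
  subset_biUnion_of_mem hσ

theorem Set.Finite.isClosed_stringUnion {S : Set PString} (hS : S.Finite) :
    IsClosed (StringUnion S) :=
  (hS.isCompact_biUnion fun σ _ => σ.isCompact_carrier).isClosed

theorem GenPos.insert {S : Set PString} (hS : GenPos S) {τ : PString}
    (hτS : Disjoint (τ.f '' Ioo 0 1) (StringUnion S)) : GenPos (insert τ S) := by
  have hends : ∀ σ ∈ S, τ.carrier ∩ σ.carrier ⊆ τ.ends := fun σ hσ =>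
    PString.inter_carrier_subset_ends hτS (carrier_subset_stringUnion hσ)
  have hfin := τ.finite_ends
  rintro σ (rfl | hσ) σ' (rfl | hσ') hne
  · exact (hne rfl).elim
  · exact ⟨hfin.subset (hends σ' hσ'), fun p hp => Or.inr (Or.inl (hends σ' hσ' hp))⟩
  · rw [inter_comm]
    exact ⟨hfin.subset (hends σ hσ), fun p hp => Or.inr (Or.inr (hends σ hσ hp))⟩
  · exact hS σ hσ σ' hσ' hne

theorem Vset_mono {S T : Set PString} (h : S ⊆ T) : Vset S ⊆ Vset T := by
  rintro v (hv | ⟨σ, hσ, σ', hσ', hne, hcross⟩)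
  · exact Or.inl (biUnion_mono h (fun _ _ => le_rfl) hv)
  · exact Or.inr ⟨σ, h hσ, σ', h hσ', hne, hcross⟩

theorem Vset_insert_subset {S : Set PString} {τ : PString}
    (hτS : Disjoint (τ.f '' Ioo 0 1) (StringUnion S)) :
    Vset (insert τ S) ⊆ Vset S ∪ τ.ends := by
  have hends : ∀ σ ∈ S, τ.carrier ∩ σ.carrier ⊆ τ.ends := fun σ hσ =>
    PString.inter_carrier_subset_ends hτS (carrier_subset_stringUnion hσ)
  rintro v (hv | ⟨σ, hσ, σ', hσ', hne, hcross⟩)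
  · simp only [biUnion_insert, mem_union] at hv
    rcases hv with hv | hv
    · exact Or.inr hv
    · exact Or.inl (Or.inl hv)
  rcases hσ with rfl | hσ <;> rcases hσ' with rfl | hσ'
  · exact (hne rfl).elim
  · exact Or.inr (hends σ' hσ' hcross.1)
  · exact Or.inr (hends σ hσ ⟨hcross.1.2, hcross.1.1⟩)
  · exact Or.inl (Or.inr ⟨σ, hσ, σ', hσ', hne, hcross⟩)

section Rainbow

variable {S : Set PString} {τ : PString} {C : Set Pt}

theorem setOf_rainbowV_subset_insert (hτ : τ.Simple) (hτC : Disjoint (τ.f '' Ioo 0 1) C) :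
    {v | RainbowV S C v} ⊆ {v | RainbowV (insert τ S) C v} := by
  rintro v ⟨hvC, hvV, hno⟩
  refine ⟨hvC, Vset_mono (subset_insert τ S) hvV, ?_⟩
  rintro ⟨σ, rfl | hσ, h⟩
  · exact PString.not_twoBranchesInside hτ hτC hvC h
  · exact hno ⟨σ, hσ, h⟩

theorem setOf_rainbowV_insert_subset (hτS : Disjoint (τ.f '' Ioo 0 1) (StringUnion S)) :
    {v | RainbowV (insert τ S) C v} ⊆ {v | RainbowV S C v} ∪ τ.ends := by
  rintro v ⟨hvC, hvV, hno⟩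
  refine (Vset_insert_subset hτS hvV).imp (fun hvV => ⟨hvC, hvV, ?_⟩) id
  exact fun ⟨σ, hσ, h⟩ => hno ⟨σ, mem_insert_of_mem τ hσ, h⟩

end Rainbow

theorem Set.ncard_le_ncard_of_subset_union {α : Type*} {s t u : Set α} (hst : s ⊆ t)
    (hts : t ⊆ s ∪ u) (hu : u.Finite) : s.ncard ≤ t.ncard := by
  by_cases ht : t.Finite
  · exact ncard_le_ncard hst ht
  · have hs : s.Infinite := fun hs => ht ((hs.union hu).subset hts)
    rw [hs.ncard]
    exact Nat.zero_le _

theorem ObstructionS.of_insert {S : Set PString} {τ : PString} {C : Set Pt}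
    (h : ObstructionS (insert τ S) C) (hτ : τ.Simple)
    (hτS : Disjoint (τ.f '' Ioo 0 1) (StringUnion S)) (hCS : C ⊆ StringUnion S) :
    ObstructionS S C :=
  ⟨⟨h.1.1, hCS⟩, (ncard_le_ncard_of_subset_union (setOf_rainbowV_subset_insert hτ
    (hτS.mono_right hCS)) (setOf_rainbowV_insert_subset hτS) τ.finite_ends).trans h.2⟩

/-- If `⋃Σ` is disconnected, one can add a simple string lying inside a single face of
`G(Σ)` and joining two distinct connected components of `⋃Σ`, so that the result is in
general position, has fewer connected components, and has no obstruction if `Σ` has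
none. -/
theorem connect_components_without_obstruction (S : Set PString)
    (hS : GenPos S) (hfin : S.Finite)
    (hdisc : ¬ IsPreconnected (StringUnion S)) :
    ∃ τ : PString, τ.Simple ∧
      (∃ q : Pt, q ∉ StringUnion S ∧
        τ.carrier \ τ.ends ⊆ connectedComponentIn (StringUnion S)ᶜ q) ∧
      τ.f 0 ∈ StringUnion S ∧ τ.f 1 ∈ StringUnion S ∧
      connectedComponentIn (StringUnion S) (τ.f 0) ≠
        connectedComponentIn (StringUnion S) (τ.f 1) ∧
      GenPos (insert τ S) ∧
      (Comps (StringUnion (insert τ S))).ncard < (Comps (StringUnion S)).ncard ∧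
      ((∀ C : Set Pt, ¬ ObstructionS S C) →
        ∀ C : Set Pt, ¬ ObstructionS (insert τ S) C) := by
  obtain ⟨A, B, hA, hB, hAB, hAne, hBne, hABS⟩ :=
    exists_isClosed_partition_of_not_isPreconnected hfin.isClosed_stringUnion hdisc
  obtain ⟨p, hp, q, hq, hpqAB⟩ := exists_openSegment_disjoint hA hB hAB hAne hBne
  have hpq : p ≠ q := hAB.ne_of_mem hp hq
  set τ := PString.ofSegment p q hpq
  have hτ : τ.Simple := (AffineMap.lineMap_injective ℝ hpq).injOn
  have hτ0 : τ.f 0 = p := AffineMap.lineMap_apply_zero p q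
  have hτ1 : τ.f 1 = q := AffineMap.lineMap_apply_one p q
  have hτAB : Disjoint (τ.f '' Ioo 0 1) (A ∪ B) := openSegment_eq_image_lineMap ℝ p q ▸ hpqAB
  have hτS : Disjoint (τ.f '' Ioo 0 1) (StringUnion S) := hABS ▸ hτAB
  have hcomp : connectedComponentIn (StringUnion S) (τ.f 0) ≠
      connectedComponentIn (StringUnion S) (τ.f 1) := by
    rw [← hABS, hτ0, hτ1]
    exact connectedComponentIn_union_ne hA hB hAB hp hq
  refine ⟨τ, hτ, τ.exists_sdiff_ends_subset_connectedComponentIn hτ hτS, hABS ▸ hτ0 ▸ Or.inl hp,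
    hABS ▸ hτ1 ▸ Or.inr hq, hcomp, hS.insert hτS, ?_, fun hno C hC => ?_⟩
  · rw [stringUnion_insert]
    exact ncard_comps_union_lt (finite_comps_biUnion hfin fun σ _ => σ.isPreconnected_carrier)
      τ.isPreconnected_carrier ⟨⟨0, ⟨le_rfl, zero_le_one⟩, rfl⟩, hABS ▸ hτ0 ▸ Or.inl hp⟩
      ⟨⟨1, ⟨zero_le_one, le_rfl⟩, rfl⟩, hABS ▸ hτ1 ▸ Or.inr hq⟩ hcomp
  obtain ⟨g, hg, hgτ⟩ := exists_continuous_leftInverse_lineMap hpq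
  have hCS : C ⊆ A ∪ B :=
    hC.1.1.subset_of_subset_union_bridge (F := τ.f) hA hB hAB AffineMap.lineMap_continuous hg hgτ
      (hτ0 ▸ hp) (hτ1 ▸ hq) (fun s hs => hτAB.notMem_of_mem_left ⟨s, hs, rfl⟩)
      (hABS ▸ stringUnion_insert τ S ▸ hC.1.2)
  exact hno C (hC.of_insert hτ hτS (hABS ▸ hCS))
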